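/- arXiv:2512.20397 — 9 statements merged into one kernel-verified Lean document; each statement's English description precedes it below -/
import Mathlib

section
/- Let a < b < c < d < e < f be real numbers, and consider the three circles with diameters [a,d], [b,e], and [c,f] on the real axis. If there exists a point z of the open upper half-plane (Im z > 0) lying on all three circles, then (b-a)*(d-c)*(f-e) = (f-a)*(c-b)*(e-d). -/
/-- `z` lies on the circle in the plane with diameter the segment `[p, q]` of the real
axis, i.e. the circle with center `(p+q)/2` and radius `(q-p)/2`. -/
def onDiamCircle (p q : ℝ) (z : ℂ) : Prop :=
  ‖z - (((p + q) / 2 : ℝ) : ℂ)‖ = (q - p) / 2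

/- Each circle reads `x² + y² - (p + q) x + p q = 0` for `z = x + iy`. Subtracting the equations
pairwise removes `x² + y²`, leaving two linear equations in `x`; eliminating `x` between them
gives the identity. -/

theorem onDiamCircle.re_sub_mul_re_sub_add_im_sq {p q : ℝ} {z : ℂ} (h : onDiamCircle p q z) :
    (z.re - p) * (z.re - q) + z.im ^ 2 = 0 := by
  have hsq : Complex.normSq (z - (((p + q) / 2 : ℝ) : ℂ)) = ((q - p) / 2) ^ 2 := by
    rw [← Complex.sq_norm, h]
  simp only [Complex.normSq_apply, Complex.sub_re, Complex.sub_im, Complex.ofReal_re,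
    Complex.ofReal_im, sub_zero] at hsq
  linear_combination hsq

theorem concurrent_geodesics_general (a b c d e f : ℝ) (z : ℂ)
    (h1 : onDiamCircle a d z) (h2 : onDiamCircle b e z) (h3 : onDiamCircle c f z) :
    (b - a) * (d - c) * (f - e) = (f - a) * (c - b) * (e - d) := by
  have e1 := h1.re_sub_mul_re_sub_add_im_sq
  have e2 := h2.re_sub_mul_re_sub_add_im_sq
  have e3 := h3.re_sub_mul_re_sub_add_im_sq
  linear_combination (b + e - c - f) * (e1 - e2) - (a + d - b - e) * (e2 - e3)

/-- **Concurrency of three geodesics (Lemma 3 of Appendix A).**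
Let `a < b < c < d < e < f` be real numbers.  If some point `z` of the open upper
half-plane lies on all three circles with diameters `[a,d]`, `[b,e]` and `[c,f]`,
then `(b-a)*(d-c)*(f-e) = (f-a)*(c-b)*(e-d)`. -/
theorem concurrent_geodesics (a b c d e f : ℝ)
    (hab : a < b) (hbc : b < c) (hcd : c < d) (hde : d < e) (hef : e < f)
    (z : ℂ) (hz : 0 < z.im)
    (h1 : onDiamCircle a d z) (h2 : onDiamCircle b e z) (h3 : onDiamCircle c f z) :
    (b - a) * (d - c) * (f - e) = (f - a) * (c - b) * (e - d) :=
  concurrent_geodesics_general a b c d e f z h1 h2 h3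
end

section
/- Let a < b < c < d < e be real numbers and let z be the unique point of the open upper half-plane lying on both the circle with diameter [a,d] and the circle with diameter [b,e]. Then Re z = c if and only if (b-a)*(d-c) = (c-b)*(e-d). -/
theorem onDiamCircle.im_sq_eq {p q : ℝ} {z : ℂ} (h : onDiamCircle p q z) :
    z.im ^ 2 = (z.re - p) * (q - z.re) := by
  have hsq := congrArg (· ^ 2) h
  simp only [Complex.sq_norm, Complex.normSq_apply, Complex.sub_re, Complex.sub_im,
    Complex.ofReal_re, Complex.ofReal_im, sub_zero] at hsq
  linear_combination hsq

theorem onDiamCircle.radical_axis {a b d e : ℝ} {z : ℂ} (h₁ : onDiamCircle a d z)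
    (h₂ : onDiamCircle b e z) : (b + e - a - d) * z.re = b * e - a * d := by
  linear_combination h₁.im_sq_eq - h₂.im_sq_eq

theorem crossing_above_c_iff_general (a b c d e : ℝ)
    (hab : a < b) (hde : d < e)
    (z : ℂ)
    (h1 : onDiamCircle a d z) (h2 : onDiamCircle b e z) :
    z.re = c ↔ (b - a) * (d - c) = (c - b) * (e - d) := by
  have hslope : b + e - a - d ≠ 0 := by linarith
  have key : (b + e - a - d) * (z.re - c) = (b - a) * (d - c) - (c - b) * (e - d) := by
    linear_combination onDiamCircle.radical_axis h1 h2
  rw [← sub_eq_zero (a := z.re), ← sub_eq_zero (a := (b - a) * (d - c)), ← key, mul_eq_zero,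
    or_iff_right hslope]

/-- **Similar-triangles step of Lemma 3.**
Let `a < b < c < d < e` be real numbers, and let `z` be the (unique) point of the open
upper half-plane lying on both the circle with diameter `[a,d]` and the circle with
diameter `[b,e]`.  Then `Re z = c` if and only if
`(b-a)*(d-c) = (c-b)*(e-d)`. -/
theorem crossing_above_c_iff (a b c d e : ℝ)
    (hab : a < b) (hbc : b < c) (hcd : c < d) (hde : d < e)
    (z : ℂ) (hz : 0 < z.im)
    (h1 : onDiamCircle a d z) (h2 : onDiamCircle b e z) :
    z.re = c ↔ (b - a) * (d - c) = (c - b) * (e - d) :=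
  crossing_above_c_iff_general a b c d e hab hde z h1 h2
end

section
/- Let b be a real number and let z be a point of the Poincaré upper half-plane. Then, as s tends to 0 from above, dist(z, b + s*i) + log s tends to log(|z - b|^2 / Im z), where dist is the hyperbolic distance of the upper half-plane and b + s*i denotes the point with real part b and imaginary part s. In particular, if two points z and w satisfy |z - b|^2 / Im z = |w - b|^2 / Im w (i.e. they lie on a common horocycle based at b), then dist(z, b + s*i) - dist(w, b + s*i) tends to 0 as s tends to 0 from above. -/
/-!
With `c(s) = |z - (b + s i)| / (2 √(Im z))`, the distance to `b + s i` is `2 arsinh (c(s) / √s)`.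
Since `arsinh x = log (x + √(1 + x²))`, adding `log s` absorbs the blow-up exactly:
`2 arsinh (c / √s) + log s = 2 log (c + √(s + c²))`, which is continuous in `s` down to `s = 0`,
where it equals `2 log (2 c(0)) = log (|z - b|² / Im z)`.
-/

open Filter Topology

/-- The hyperbolic distance from a point `z` of the upper half-plane to the point
`b + s*i` (for a real boundary point `b` and cutoff `s > 0`); defined to be `0` for
`s ≤ 0`. -/
noncomputable def distToCutoff (z : UpperHalfPlane) (b s : ℝ) : ℝ :=
  if hs : 0 < s then
    dist z (⟨(b : ℂ) + s * Complex.I, by simpa using hs⟩ : UpperHalfPlane)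
  else 0

open Real

lemma two_mul_arsinh_div_sqrt_add_log {c s : ℝ} (hs : 0 < s) :
    2 * arsinh (c / √s) + log s = 2 * log (c + √(s + c ^ 2)) := by
  have hsqrt : 0 < √s := sqrt_pos.2 hs
  have hpos : 0 < c + √(s + c ^ 2) := by
    have : |c| < √(s + c ^ 2) := by
      rw [← sqrt_sq_eq_abs]; exact sqrt_lt_sqrt (sq_nonneg _) (by linarith)
    linarith [neg_abs_le c]
  have hroot : √s * √(1 + (c / √s) ^ 2) = √(s + c ^ 2) := by
    rw [← sqrt_mul hs.le, div_pow, sq_sqrt hs.le, mul_add, mul_div_cancel₀ _ hs.ne', mul_one]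
  have hfactor : c / √s + √(1 + (c / √s) ^ 2) = (c + √(s + c ^ 2)) / √s := by
    rw [← hroot]; field_simp
  rw [arsinh, hfactor, log_div hpos.ne' hsqrt.ne', log_sqrt hs.le]
  ring

lemma tendsto_two_mul_arsinh_div_sqrt_add_log {c : ℝ → ℝ} (hc : ContinuousAt c 0) (hc0 : 0 < c 0) :
    Tendsto (fun s => 2 * arsinh (c s / √s) + log s) (𝓝[>] 0) (𝓝 (2 * log (2 * c 0))) := by
  have hval : c 0 + √(0 + c 0 ^ 2) = 2 * c 0 := by rw [zero_add, sqrt_sq hc0.le]; ring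
  have hcont : ContinuousAt (fun s => 2 * log (c s + √(s + c s ^ 2))) 0 :=
    (ContinuousAt.log (f := fun s => c s + √(s + c s ^ 2)) (by fun_prop)
      (by rw [hval]; positivity)).const_mul 2
  rw [← hval]
  refine (hcont.tendsto.mono_left nhdsWithin_le_nhds).congr' ?_
  filter_upwards [self_mem_nhdsWithin] with s hs
  exact (two_mul_arsinh_div_sqrt_add_log hs).symm

lemma distToCutoff_eq_two_mul_arsinh (z : UpperHalfPlane) (b : ℝ) {s : ℝ} (hs : 0 < s) :
    distToCutoff z b s = 2 * arsinh (‖(z : ℂ) - (b + s * Complex.I)‖ / (2 * √z.im) / √s) := by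
  rw [distToCutoff, dif_pos hs, UpperHalfPlane.dist_eq, Complex.dist_eq, UpperHalfPlane.coe_mk]
  simp [sqrt_mul z.im_pos.le, div_div, mul_assoc]

lemma tendsto_distToCutoff_add_log (z : UpperHalfPlane) (b : ℝ) :
    Tendsto (fun s : ℝ => distToCutoff z b s + log s) (𝓝[>] 0)
      (𝓝 (log (‖(z : ℂ) - b‖ ^ 2 / (z : ℂ).im))) := by
  set c : ℝ → ℝ := fun s => ‖(z : ℂ) - (b + s * Complex.I)‖ / (2 * √z.im)
  have hc : ContinuousAt c 0 := by fun_prop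
  have hzb : (z : ℂ) - b ≠ 0 := fun h => z.im_pos.ne' (by simpa using congrArg Complex.im h)
  have h2c : 2 * c 0 = ‖(z : ℂ) - b‖ / √z.im := by
    simp only [c]; push_cast; field_simp; simp
  have hc0 : 0 < c 0 := by
    have : 0 < 2 * c 0 := h2c ▸ div_pos (norm_pos_iff.2 hzb) (sqrt_pos.2 z.im_pos)
    linarith
  have hlim : 2 * log (2 * c 0) = log (‖(z : ℂ) - b‖ ^ 2 / z.im) := by
    have hsq : ‖(z : ℂ) - b‖ ^ 2 / z.im = (‖(z : ℂ) - b‖ / √z.im) ^ 2 := by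
      rw [div_pow, sq_sqrt z.im_pos.le]
    rw [h2c, hsq, log_pow]
    norm_num
  rw [UpperHalfPlane.coe_im, ← hlim]
  refine (tendsto_two_mul_arsinh_div_sqrt_add_log hc hc0).congr' ?_
  filter_upwards [self_mem_nhdsWithin] with s hs
  rw [distToCutoff_eq_two_mul_arsinh z b hs]

/-- **Renormalized distance to a boundary point and horocycles.**
Let `b` be a real boundary point and `z` a point of the Poincaré upper half-plane.
As `s → 0⁺`, `dist(z, b + s*i) + log s` tends to `log(|z - b|² / Im z)`.
In particular, if two points `z`, `w` lie on a common horocycle based at `b`,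
i.e. `|z - b|²/Im z = |w - b|²/Im w`, then
`dist(z, b + s*i) - dist(w, b + s*i) → 0` as `s → 0⁺`. -/
theorem renormalized_dist_to_boundary (b : ℝ) (z : UpperHalfPlane) :
    Tendsto (fun s : ℝ => distToCutoff z b s + Real.log s) (𝓝[>] 0)
      (𝓝 (Real.log (‖(z : ℂ) - (b : ℂ)‖ ^ 2 / (z : ℂ).im))) ∧
    ∀ w : UpperHalfPlane,
      ‖(z : ℂ) - (b : ℂ)‖ ^ 2 / (z : ℂ).im =
        ‖(w : ℂ) - (b : ℂ)‖ ^ 2 / (w : ℂ).im →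
      Tendsto (fun s : ℝ => distToCutoff z b s - distToCutoff w b s) (𝓝[>] 0) (𝓝 0) := by
  refine ⟨tendsto_distToCutoff_add_log z b, fun w hw => ?_⟩
  have h := (tendsto_distToCutoff_add_log z b).sub (tendsto_distToCutoff_add_log w b)
  rw [hw, sub_self] at h
  simpa using h
end

section
/- Let u and v be unit vectors in the plane with u·v = -1/2 (angle 2π/3 between them), and let r, r' ∈ (0,1). The circle of radius r centered at (1-r)·u and the circle of radius r' centered at (1-r')·v are externally tangent if and only if r' = 3*(1-r)/(3+r). -/
open scoped RealInnerProductSpace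

/-- **Tangency relation for horocycles at angle `2π/3`.**
Let `u`, `v` be unit vectors in the plane with `⟪u, v⟫ = -1/2` (angle `2π/3` between
them), and let `r, r' ∈ (0,1)`.  The circle of radius `r` centered at `(1-r)•u` and the
circle of radius `r'` centered at `(1-r')•v` are externally tangent if and only if
`r' = 3*(1-r)/(3+r)`. -/
theorem horocycles_tangent_at_two_pi_thirds (u v : EuclideanSpace ℝ (Fin 2))
    (hu : ‖u‖ = 1) (hv : ‖v‖ = 1) (huv : ⟪u, v⟫ = -(1 / 2 : ℝ))
    (r r' : ℝ) (hr : r ∈ Set.Ioo (0 : ℝ) 1) (hr' : r' ∈ Set.Ioo (0 : ℝ) 1) :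
    dist ((1 - r) • u) ((1 - r') • v) = r + r' ↔ r' = 3 * (1 - r) / (3 + r) := by
  obtain ⟨hr0, hr1⟩ := hr
  obtain ⟨hr'0, hr'1⟩ := hr'
  have hsq : dist ((1 - r) • u) ((1 - r') • v) ^ 2
      = (1 - r) ^ 2 + (1 - r') ^ 2 + (1 - r) * (1 - r') := by
    rw [dist_eq_norm, @norm_sub_sq_real]
    rw [real_inner_smul_left, real_inner_smul_right, huv]
    rw [norm_smul, norm_smul, hu, hv]
    rw [Real.norm_eq_abs, Real.norm_eq_abs, abs_of_pos (by linarith), abs_of_pos (by linarith)]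
    ring
  have hd : dist ((1 - r) • u) ((1 - r') • v) = r + r' ↔
      dist ((1 - r) • u) ((1 - r') • v) ^ 2 = (r + r') ^ 2 := by
    constructor
    · intro h; rw [h]
    · intro h
      have hnn : (0:ℝ) ≤ dist ((1 - r) • u) ((1 - r') • v) := dist_nonneg
      calc dist ((1 - r) • u) ((1 - r') • v)
          = Real.sqrt (dist ((1 - r) • u) ((1 - r') • v) ^ 2) := (Real.sqrt_sq hnn).symm
        _ = Real.sqrt ((r + r') ^ 2) := by rw [h]
        _ = r + r' := Real.sqrt_sq (by linarith)
  rw [hd, hsq]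
  have h3 : (3 : ℝ) + r ≠ 0 := by linarith
  rw [eq_div_iff h3] at *
  constructor
  · intro h; nlinarith
  · intro h; nlinarith
end

section
/- Let θ ∈ (0, π/2), let u and v be unit vectors in the plane with u·v = cos(π - 2θ), and let r_a, r_b ∈ (0,1). The circle of radius r_a centered at (1-r_a)·u and the circle of radius r_b centered at (1-r_b)·v are externally tangent if and only if r_b = cos²θ*(1-r_a)/(cos²θ + r_a*sin²θ). -/
/-!
By the law of cosines the squared distance between the centres is
`(1-ra)² + (1-rb)² - 2(1-ra)(1-rb)⟪u, v⟫`. Both `dist` and `ra + rb` are nonnegative, so tangency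
is equivalent to this being `(ra + rb)²`, i.e. to `2(1 - ra - rb) = (1 + ⟪u, v⟫)(1-ra)(1-rb)`.
Since `1 + cos(π - 2θ) = 2 sin²θ`, this is the relation `1 - ra - rb = sin²θ (1-ra)(1-rb)`, which is
linear in `rb` and solves to the stated formula.
-/

open scoped RealInnerProductSpace

open Real

section InnerProductSpace

variable {E : Type*} [NormedAddCommGroup E] [InnerProductSpace ℝ E] {u v : E}

theorem dist_smul_smul_sq_of_norm_eq_one (hu : ‖u‖ = 1) (hv : ‖v‖ = 1) (a b : ℝ) :
    dist (a • u) (b • v) ^ 2 = a ^ 2 + b ^ 2 - 2 * a * b * ⟪u, v⟫ := by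
  rw [dist_eq_norm, norm_sub_sq_real, real_inner_smul_left, real_inner_smul_right, norm_smul,
    norm_smul, hu, hv, Real.norm_eq_abs, Real.norm_eq_abs]
  simp only [mul_one, sq_abs]
  ring

theorem dist_one_sub_smul_sq_eq_add_sq_iff (hu : ‖u‖ = 1) (hv : ‖v‖ = 1) (ra rb : ℝ) :
    dist ((1 - ra) • u) ((1 - rb) • v) ^ 2 = (ra + rb) ^ 2 ↔
      2 * (1 - ra - rb) = (1 + ⟪u, v⟫) * (1 - ra) * (1 - rb) := by
  rw [dist_smul_smul_sq_of_norm_eq_one hu hv]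
  constructor <;> intro h
  · linear_combination (1 / 2 : ℝ) * h
  · linear_combination (2 : ℝ) * h

end InnerProductSpace

theorem one_add_cos_pi_sub_two_mul (θ : ℝ) : 1 + cos (π - 2 * θ) = 2 * sin θ ^ 2 := by
  rw [cos_pi_sub, cos_two_mul, cos_sq']
  ring

theorem cos_sq_add_mul_sin_sq_pos (θ : ℝ) {r : ℝ} (hr : 0 < r) : 0 < cos θ ^ 2 + r * sin θ ^ 2 := by
  rcases (sq_nonneg (cos θ)).eq_or_lt with hc | hc
  · have hs : sin θ ^ 2 = 1 := by linarith [sin_sq_add_cos_sq θ]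
    rw [← hc, hs]
    linarith
  · have := mul_nonneg hr.le (sq_nonneg (sin θ))
    linarith

theorem horocycles_tangent_four_subregions_general (θ : ℝ)
    (u v : EuclideanSpace ℝ (Fin 2)) (hu : ‖u‖ = 1) (hv : ‖v‖ = 1)
    (huv : ⟪u, v⟫ = Real.cos (Real.pi - 2 * θ))
    (ra rb : ℝ) (hra : ra ∈ Set.Ioo (0 : ℝ) 1) :
    dist ((1 - ra) • u) ((1 - rb) • v) = ra + rb ↔
      rb = Real.cos θ ^ 2 * (1 - ra) / (Real.cos θ ^ 2 + ra * Real.sin θ ^ 2) := by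
  obtain ⟨hra0, hra1⟩ := hra
  have hD := cos_sq_add_mul_sin_sq_pos θ hra0
  have hsq : dist ((1 - ra) • u) ((1 - rb) • v) ^ 2 = (ra + rb) ^ 2 ↔
      rb = cos θ ^ 2 * (1 - ra) / (cos θ ^ 2 + ra * sin θ ^ 2) := by
    rw [dist_one_sub_smul_sq_eq_add_sq_iff hu hv, huv, one_add_cos_pi_sub_two_mul,
      eq_div_iff hD.ne']
    constructor <;> intro h
    · linear_combination (-1 / 2 : ℝ) * h + (ra + rb - 1) * sin_sq_add_cos_sq θ
    · linear_combination (-2 : ℝ) * h + 2 * (ra + rb - 1) * sin_sq_add_cos_sq θ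
  refine ⟨fun h => hsq.1 (by rw [h]), fun h => ?_⟩
  have hrb : 0 ≤ rb := h ▸ div_nonneg (mul_nonneg (sq_nonneg _) (by linarith)) hD.le
  exact (pow_left_inj₀ dist_nonneg (by linarith) two_ne_zero).1 (hsq.2 h)

/-- **Tangency relation for horocycles in the four-subregion configuration.**
Let `θ ∈ (0, π/2)`, let `u`, `v` be unit vectors in the plane with
`⟪u, v⟫ = cos(π - 2θ)`, and let `r_a, r_b ∈ (0,1)`.  The circle of radius `r_a`
centered at `(1-r_a)•u` and the circle of radius `r_b` centered at `(1-r_b)•v` are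
externally tangent if and only if `r_b = cos²θ*(1-r_a)/(cos²θ + r_a*sin²θ)`. -/
theorem horocycles_tangent_four_subregions (θ : ℝ) (hθ : θ ∈ Set.Ioo 0 (Real.pi / 2))
    (u v : EuclideanSpace ℝ (Fin 2)) (hu : ‖u‖ = 1) (hv : ‖v‖ = 1)
    (huv : ⟪u, v⟫ = Real.cos (Real.pi - 2 * θ))
    (ra rb : ℝ) (hra : ra ∈ Set.Ioo (0 : ℝ) 1) (hrb : rb ∈ Set.Ioo (0 : ℝ) 1) :
    dist ((1 - ra) • u) ((1 - rb) • v) = ra + rb ↔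
      rb = Real.cos θ ^ 2 * (1 - ra) / (Real.cos θ ^ 2 + ra * Real.sin θ ^ 2) :=
  horocycles_tangent_four_subregions_general θ u v hu hv huv ra rb hra
end

section
/- Let θ ∈ (0, π/2) and r ∈ (0,1), and define r_b := cos²θ*(1-r)/(cos²θ + r*sin²θ) and r_d := sin²θ*(1-r)/(sin²θ + r*cos²θ). Then r_b + r_d = 1 if and only if r = sin(2θ)/(2 + sin(2θ)). -/
/-! Write `s = sin θ`, `c = cos θ`. Clearing denominators and using `s² + c² = 1`, the equation
`r_b + r_d = 1` becomes `(s c (1 - r))² = r²`. Both bases are nonnegative, so this is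
`s c (1 - r) = r`, i.e. `r = s c / (1 + s c) = sin 2θ / (2 + sin 2θ)`. -/

lemma horosphere_radii_sum_eq_one_iff_sq_eq {s c r : ℝ} (hsc : s ^ 2 + c ^ 2 = 1)
    (hb : c ^ 2 + r * s ^ 2 ≠ 0) (hd : s ^ 2 + r * c ^ 2 ≠ 0) :
    c ^ 2 * (1 - r) / (c ^ 2 + r * s ^ 2) + s ^ 2 * (1 - r) / (s ^ 2 + r * c ^ 2) = 1 ↔
      (s * c * (1 - r)) ^ 2 = r ^ 2 := by
  rw [div_add_div _ _ hb hd, div_eq_one_iff_eq (mul_ne_zero hb hd)]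
  constructor <;> intro h
  · linear_combination h + r ^ 2 * (s ^ 2 + c ^ 2 + 1) * hsc
  · linear_combination h - r ^ 2 * (s ^ 2 + c ^ 2 + 1) * hsc

lemma mul_one_sub_eq_iff_eq_div {p r : ℝ} (hp : 1 + p ≠ 0) :
    p * (1 - r) = r ↔ r = p / (1 + p) := by
  rw [eq_div_iff hp]
  constructor <;> intro h <;> linear_combination -h

/-- **Mutual tangency of the two adjacent horospheres.**
Let `θ ∈ (0, π/2)` and `r ∈ (0,1)`, and define
`r_b := cos²θ*(1-r)/(cos²θ + r*sin²θ)` and `r_d := sin²θ*(1-r)/(sin²θ + r*cos²θ)`.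
Then `r_b + r_d = 1` if and only if `r = sin(2θ)/(2 + sin(2θ))`. -/
theorem adjacent_horospheres_tangent_iff (θ r : ℝ)
    (hθ : θ ∈ Set.Ioo 0 (Real.pi / 2)) (hr : r ∈ Set.Ioo (0 : ℝ) 1) :
    Real.cos θ ^ 2 * (1 - r) / (Real.cos θ ^ 2 + r * Real.sin θ ^ 2) +
        Real.sin θ ^ 2 * (1 - r) / (Real.sin θ ^ 2 + r * Real.cos θ ^ 2) = 1 ↔
      r = Real.sin (2 * θ) / (2 + Real.sin (2 * θ)) := by
  obtain ⟨hr0, hr1⟩ := hr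
  have hs : 0 < Real.sin θ :=
    Real.sin_pos_of_pos_of_lt_pi hθ.1 (by linarith [hθ.2, Real.pi_pos])
  have hc : 0 < Real.cos θ := Real.cos_pos_of_mem_Ioo ⟨by linarith [hθ.1, Real.pi_pos], hθ.2⟩
  have hsin2 : Real.sin (2 * θ) / (2 + Real.sin (2 * θ)) =
      Real.sin θ * Real.cos θ / (1 + Real.sin θ * Real.cos θ) := by
    rw [Real.sin_two_mul, mul_assoc, ← mul_one_add, mul_div_mul_left _ _ two_ne_zero]
  rw [horosphere_radii_sum_eq_one_iff_sq_eq (Real.sin_sq_add_cos_sq θ) (by positivity)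
      (by positivity), sq_eq_sq₀ (mul_nonneg (mul_pos hs hc).le (sub_nonneg.2 hr1.le)) hr0.le,
    mul_one_sub_eq_iff_eq_div (by positivity), hsin2]
end

section
/- Let ρ ∈ [2√3 - 3, 1), set D := ρ² + 6ρ - 3, y₋ := (1 - ρ - √D)/2 and y₊ := (1 - ρ + √D)/2. Then -1 < y₋ ≤ y₊ < 1, 3 - ρ - √D > 0, and ((1 + y₊)*(1 - y₋))/((1 - y₊)*(1 + y₋)) = ( √3*(1 + ρ + √D)/(3 - ρ - √D) )². -/
/-! With `s = √(ρ² + 6ρ - 3)` the four factors are `1 + y₊ = (3 - ρ + s)/2`, `1 - y₋ = (1 + ρ + s)/2`,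
`1 - y₊ = (1 + ρ - s)/2` and `1 + y₋ = (3 - ρ - s)/2`. Since `s² = ρ² + 6ρ - 3`, both conjugate
products `(3 - ρ)² - s²` and `3((1 + ρ)² - s²)` equal `12(1 - ρ)`, so
`(3 - ρ + s)/(1 + ρ - s) = 3(1 + ρ + s)/(3 - ρ - s)` and the cross ratio becomes a perfect square.
For `ρ < 1` the discriminant is below `(1 + ρ)²`, which gives all the inequalities. -/

theorem horosphere_discr_nonneg {ρ : ℝ} (hρ : 2 * √3 - 3 ≤ ρ) : 0 ≤ ρ ^ 2 + 6 * ρ - 3 := by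
  have h3 : √3 ^ 2 = 3 := Real.sq_sqrt (by norm_num)
  nlinarith [Real.sqrt_nonneg 3]

theorem sqrt_horosphere_discr_lt {ρ : ℝ} (h₀ : -1 < ρ) (h₁ : ρ < 1) :
    √(ρ ^ 2 + 6 * ρ - 3) < 1 + ρ :=
  (Real.sqrt_lt' (by linarith)).mpr (by nlinarith)

theorem horosphere_cross_ratio_eq {ρ s : ℝ} (hs : s ^ 2 = ρ ^ 2 + 6 * ρ - 3)
    (h₁ : 1 + ρ - s ≠ 0) (h₃ : 3 - ρ - s ≠ 0) :
    ((1 + (1 - ρ + s) / 2) * (1 - (1 - ρ - s) / 2)) /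
        ((1 - (1 - ρ + s) / 2) * (1 + (1 - ρ - s) / 2)) =
      (√3 * (1 + ρ + s) / (3 - ρ - s)) ^ 2 := by
  rw [div_pow, mul_pow, Real.sq_sqrt (by norm_num : (0 : ℝ) ≤ 3)]
  have h₁' : 1 - (1 - ρ + s) / 2 ≠ 0 := by contrapose! h₁; linarith
  have h₃' : 1 + (1 - ρ - s) / 2 ≠ 0 := by contrapose! h₃; linarith
  have h_conj : (3 - ρ + s) * (3 - ρ - s) = 3 * ((1 + ρ + s) * (1 + ρ - s)) := by
    linear_combination 2 * hs
  rw [div_eq_div_iff (mul_ne_zero h₁' h₃') (pow_ne_zero 2 h₃)]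
  linear_combination (1 + ρ + s) * (3 - ρ - s) / 4 * h_conj

/-- **Hyperbolic distance between the two horosphere intersection points.**
Let `ρ ∈ [2√3 - 3, 1)`, set `D := ρ² + 6ρ - 3`, `y₋ := (1 - ρ - √D)/2` and
`y₊ := (1 - ρ + √D)/2`.  Then `-1 < y₋ ≤ y₊ < 1`, `3 - ρ - √D > 0`, and
`((1 + y₊)(1 - y₋)) / ((1 - y₊)(1 + y₋)) = (√3 (1 + ρ + √D) / (3 - ρ - √D))²`. -/
theorem horosphere_intersection_distance (ρ : ℝ)
    (hρ : ρ ∈ Set.Ico (2 * Real.sqrt 3 - 3) 1) :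
    -1 < (1 - ρ - Real.sqrt (ρ ^ 2 + 6 * ρ - 3)) / 2 ∧
    (1 - ρ - Real.sqrt (ρ ^ 2 + 6 * ρ - 3)) / 2 ≤
      (1 - ρ + Real.sqrt (ρ ^ 2 + 6 * ρ - 3)) / 2 ∧
    (1 - ρ + Real.sqrt (ρ ^ 2 + 6 * ρ - 3)) / 2 < 1 ∧
    0 < 3 - ρ - Real.sqrt (ρ ^ 2 + 6 * ρ - 3) ∧
    ((1 + (1 - ρ + Real.sqrt (ρ ^ 2 + 6 * ρ - 3)) / 2) *
        (1 - (1 - ρ - Real.sqrt (ρ ^ 2 + 6 * ρ - 3)) / 2)) /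
      ((1 - (1 - ρ + Real.sqrt (ρ ^ 2 + 6 * ρ - 3)) / 2) *
        (1 + (1 - ρ - Real.sqrt (ρ ^ 2 + 6 * ρ - 3)) / 2)) =
      (Real.sqrt 3 * (1 + ρ + Real.sqrt (ρ ^ 2 + 6 * ρ - 3)) /
        (3 - ρ - Real.sqrt (ρ ^ 2 + 6 * ρ - 3))) ^ 2 := by
  obtain ⟨hρ₀, hρ₁⟩ := hρ
  have h_sqrt3 : 1 < √3 := Real.lt_sqrt_of_sq_lt (by norm_num)
  have hs_lt := sqrt_horosphere_discr_lt (by linarith) hρ₁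
  have hs_nonneg := Real.sqrt_nonneg (ρ ^ 2 + 6 * ρ - 3)
  have hs_sq := Real.sq_sqrt (horosphere_discr_nonneg hρ₀)
  exact ⟨by linarith, by linarith, by linarith, by linarith,
    horosphere_cross_ratio_eq hs_sq (by linarith) (by linarith)⟩
end

section
/- Let L_C, L_D, L_E > 0 and define x := (-L_D*(L_C+L_D) + sqrt(L_D*(L_C+L_D)*(L_D+L_E)*(L_C+L_D+L_E)))/(L_C + 2*L_D + L_E) and y := L_C*(L_C+L_D+x)/(L_C + 2*L_D + 2*x). Then 0 < x < L_E, 0 < y < L_C, and the pair (x,y) satisfies the two equations y*(L_D + x) = (L_C + L_D + x)*(L_C - y) and y*L_D*(L_E - x) = (L_C + L_D + L_E)*(L_C - y)*x. -/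
/-!
Put `T = L_C + 2L_D + L_E` and `P = L_D(L_C+L_D)`. Since
`(L_D+L_E)(L_C+L_D+L_E) = P + L_E T`, the displayed `x` is the positive root of
`T x² + 2P x = P L_E`, which forces `0 < x < L_E`. The first (perpendicularity) equation is linear
in `y` and is solved by the displayed `y`, which divides `[0, L_C]` in the ratio
`(L_C+L_D+x) : (L_D+x)`. Eliminating `y` from the second (concurrency) equation with the first one
leaves exactly the quadratic for `x`.
-/

namespace PerpendicularityConcurrency

lemma quadratic_root_eq {a b c : ℝ} (ha : a ≠ 0) (hd : 0 ≤ b ^ 2 + a * c) :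
    a * ((-b + √(b ^ 2 + a * c)) / a) ^ 2 + 2 * b * ((-b + √(b ^ 2 + a * c)) / a) = c := by
  have hs := Real.sq_sqrt hd
  field_simp
  linear_combination hs

lemma quadratic_root_pos {a b c : ℝ} (ha : 0 < a) (hc : 0 < c) :
    0 < (-b + √(b ^ 2 + a * c)) / a := by
  have hb : b < √(b ^ 2 + a * c) :=
    calc b ≤ |b| := le_abs_self b
      _ = √(b ^ 2) := (Real.sqrt_sq_eq_abs b).symm
      _ < √(b ^ 2 + a * c) := Real.sqrt_lt_sqrt (sq_nonneg b) (by linarith [mul_pos ha hc])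
  exact div_pos (by linarith) ha

lemma pos_lt_and_mul_eq_mul_sub_of_mul_add_eq {c u v y : ℝ} (hc : 0 < c) (hu : 0 < u) (hv : 0 < v)
    (hy : y * (u + v) = c * u) : 0 < y ∧ y < c ∧ y * v = u * (c - y) := by
  refine ⟨?_, ?_, by linear_combination hy⟩
  · nlinarith [mul_pos hc hu]
  · nlinarith [mul_pos hc hv]

end PerpendicularityConcurrency

open PerpendicularityConcurrency in
/-- **Solution of the perpendicularity and concurrency system (Appendix A).**
Let `L_C, L_D, L_E > 0` and define
`x := (-L_D(L_C+L_D) + √(L_D(L_C+L_D)(L_D+L_E)(L_C+L_D+L_E)))/(L_C + 2L_D + L_E)` and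
`y := L_C(L_C+L_D+x)/(L_C + 2L_D + 2x)`.  Then `0 < x < L_E`, `0 < y < L_C`, and
`(x, y)` satisfies the two equations
`y(L_D + x) = (L_C + L_D + x)(L_C - y)` and
`y L_D (L_E - x) = (L_C + L_D + L_E)(L_C - y) x`. -/
theorem perpendicularity_concurrency_solution (LC LD LE : ℝ)
    (hC : 0 < LC) (hD : 0 < LD) (hE : 0 < LE) :
    let x := (-(LD * (LC + LD)) +
        Real.sqrt (LD * (LC + LD) * (LD + LE) * (LC + LD + LE))) / (LC + 2 * LD + LE)
    let y := LC * (LC + LD + x) / (LC + 2 * LD + 2 * x)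
    0 < x ∧ x < LE ∧ 0 < y ∧ y < LC ∧
      y * (LD + x) = (LC + LD + x) * (LC - y) ∧
      y * LD * (LE - x) = (LC + LD + LE) * (LC - y) * x := by
  intro x y
  have hT : 0 < LC + 2 * LD + LE := by linarith
  have hdisc : LD * (LC + LD) * (LD + LE) * (LC + LD + LE)
      = (LD * (LC + LD)) ^ 2 + (LC + 2 * LD + LE) * (LD * (LC + LD) * LE) := by ring
  have hx : x = (-(LD * (LC + LD)) + √((LD * (LC + LD)) ^ 2
      + (LC + 2 * LD + LE) * (LD * (LC + LD) * LE))) / (LC + 2 * LD + LE) := by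
    rw [← hdisc]
  have hquad : (LC + 2 * LD + LE) * x ^ 2 + 2 * (LD * (LC + LD)) * x = LD * (LC + LD) * LE :=
    hx ▸ quadratic_root_eq hT.ne' (by positivity)
  have hx0 : 0 < x := hx ▸ quadratic_root_pos hT (by positivity)
  have hxE : x < LE := by
    have hP : 0 < LD * (LC + LD) := by positivity
    nlinarith [mul_pos hT (pow_pos hx0 2)]
  have hden : 0 < LC + 2 * LD + 2 * x := by linarith
  have hy : y * ((LC + LD + x) + (LD + x)) = LC * (LC + LD + x) := by
    rw [show (LC + LD + x) + (LD + x) = LC + 2 * LD + 2 * x by ring]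
    exact div_mul_cancel₀ _ hden.ne'
  clear_value x y
  obtain ⟨hy0, hyC, hperp⟩ := 
    pos_lt_and_mul_eq_mul_sub_of_mul_add_eq hC (by linarith) (by linarith) hy
  refine ⟨hx0, hxE, hy0, hyC, hperp, ?_⟩
  refine mul_right_cancel₀ hden.ne' ?_
  linear_combination (LD * (LE - x) + (LC + LD + LE) * x) * hy - LC * hquad
end

section
/- Let L_C, L_D, L_E > 0. Define d(u,v,w) := (v+w)*sqrt(u*v/(w*(u+v+w))) for u,v,w > 0, define x := (-L_D*(L_C+L_D) + sqrt(L_D*(L_C+L_D)*(L_D+L_E)*(L_C+L_D+L_E)))/(L_C + 2*L_D + L_E), y := L_C*(L_C+L_D+x)/(L_C + 2*L_D + 2*x), and p := L_C*(L_C+L_D+L_E)/(L_C + 2*L_D + 2*L_E). Then 2*log(L_C+L_D+x-y) - log(d(y, L_C-y, L_D+x)) - log(d(L_E-x, L_D+x, L_C-y)) + 2*log(L_D+L_E) - log(d(L_C,L_D,L_E)) - 2*log(L_C+L_D+L_E-p) + log(d(p, L_C-p, L_D+L_E)) = log( (1/2)*sqrt( (L_C*(2*L_D+L_E) + 2*(L_D*(L_D+L_E)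 + sqrt(L_D*(L_C+L_D)*(L_D+L_E)*(L_C+L_D+L_E)))) / (L_D*(L_C+L_D+L_E)) ) ). -/
/-- The Euclidean diameter `d(u,v,w) = (v+w)·√(uv/(w(u+v+w)))` of the horocycle based
at the common endpoint of consecutive boundary intervals of lengths `u, v` and passing
through the crossing point of the geodesics over the interval configurations `(u,v)`
and `(v,w)`. -/
noncomputable def horoDiam (u v w : ℝ) : ℝ :=
  (v + w) * Real.sqrt (u * v / (w * (u + v + w)))

/-!
Both `y` and `p` are of the form `perpFoot c w = c (c + w) / (c + 2w)` (with `c = L_C` and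
`w = L_D + x`, resp. `w = L_D + L_E`), and for such a point the radicand of `horoDiam` is the
perfect square `(c / (c + 2w))²`. Hence `2 log(v + w) - log d` is `log (2w (c + w) / c)` for these
two horocycles, and the claim reduces to a multiplicative identity between the two remaining
diameters `d(L_E - x, L_D + x, L_C - y)`, `d(L_C, L_D, L_E)` and the right-hand side. Squared, that
identity is rational in `x` and follows from the quadratic equation satisfied by `x`, whose
discriminant makes the nested radical `√(L_D (L_C + L_D) (L_D + L_E) (L_C + L_D + L_E))` equal to
`(L_C + 2L_D + L_E) x + L_D (L_C + L_D)`.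
-/

open Real

theorem horoDiam_pos {u v w : ℝ} (hu : 0 < u) (hv : 0 < v) (hw : 0 < w) :
    0 < horoDiam u v w := by
  unfold horoDiam
  positivity

noncomputable def perpFoot (c w : ℝ) : ℝ := c * (c + w) / (c + 2 * w)

section perpFoot

variable {c w : ℝ}

theorem sub_perpFoot (hcw : c + 2 * w ≠ 0) : c - perpFoot c w = c * w / (c + 2 * w) := by
  rw [eq_div_iff hcw, perpFoot, sub_mul, div_mul_cancel₀ _ hcw]
  ring

theorem sub_perpFoot_pos (hc : 0 < c) (hw : 0 < w) : 0 < c - perpFoot c w := by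
  rw [sub_perpFoot (by positivity)]
  positivity

theorem sub_perpFoot_add (hcw : c + 2 * w ≠ 0) :
    c - perpFoot c w + w = 2 * w * (c + w) / (c + 2 * w) := by
  rw [sub_perpFoot hcw, div_add' _ _ _ hcw]
  ring

theorem horoDiam_perpFoot (hc : 0 < c) (hw : 0 < w) :
    horoDiam (perpFoot c w) (c - perpFoot c w) w = (c - perpFoot c w + w) * (c / (c + 2 * w)) := by
  have hcw : c + 2 * w ≠ 0 := by positivity
  have hratio : perpFoot c w * (c - perpFoot c w) / (w * (perpFoot c w + (c - perpFoot c w) + w))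
      = (c / (c + 2 * w)) ^ 2 := by
    rw [sub_perpFoot hcw, perpFoot]
    field_simp
    ring
  rw [horoDiam, hratio, sqrt_sq (by positivity)]

theorem log_horoDiam_perpFoot (hc : 0 < c) (hw : 0 < w) :
    log (horoDiam (perpFoot c w) (c - perpFoot c w) w)
      = 2 * log (c - perpFoot c w + w) + log c - log 2 - log w - log (c + w) := by
  have hcw : 0 < c + 2 * w := by positivity
  have hlog_add : log (c - perpFoot c w + w) = log 2 + log w + log (c + w) - log (c + 2 * w) := by
    rw [sub_perpFoot_add hcw.ne', log_div (by positivity) hcw.ne', log_mul (by positivity)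
      (by positivity), log_mul two_ne_zero hw.ne']
  have hpos : 0 < c - perpFoot c w + w := by rw [sub_perpFoot_add hcw.ne']; positivity
  rw [horoDiam_perpFoot hc hw, log_mul hpos.ne' (by positivity), log_div hc.ne' hcw.ne']
  linarith

end perpFoot

section root

-- `x` of the statement is the positive root of `(c + 2d + e) X² + 2d(c + d) X = d(c + d) e`.

variable {c d e x : ℝ}

theorem sqrt_discr_eq_root (hT : c + 2 * d + e ≠ 0)
    (hx : x = (-(d * (c + d)) + √(d * (c + d) * (d + e) * (c + d + e))) / (c + 2 * d + e)) :
    √(d * (c + d) * (d + e) * (c + d + e)) = (c + 2 * d + e) * x + d * (c + d) := by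
  rw [hx, mul_div_cancel₀ _ hT]
  ring

theorem root_quadratic (hc : 0 < c) (hd : 0 < d) (he : 0 < e)
    (hx : x = (-(d * (c + d)) + √(d * (c + d) * (d + e) * (c + d + e))) / (c + 2 * d + e)) :
    (c + 2 * d + e) * x ^ 2 + 2 * (d * (c + d)) * x = d * (c + d) * e := by
  have hT : 0 < c + 2 * d + e := by positivity
  have hsq := sq_sqrt (by positivity : 0 ≤ d * (c + d) * (d + e) * (c + d + e))
  rw [sqrt_discr_eq_root hT.ne' hx] at hsq
  refine mul_left_cancel₀ hT.ne' ?_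
  linear_combination hsq

theorem root_pos (hc : 0 < c) (hd : 0 < d) (he : 0 < e)
    (hx : x = (-(d * (c + d)) + √(d * (c + d) * (d + e) * (c + d + e))) / (c + 2 * d + e)) :
    0 < x := by
  have hlt : d * (c + d) < √(d * (c + d) * (d + e) * (c + d + e)) := by
    have hgap : 0 < d * (c + d) * (e * (c + 2 * d + e)) := by positivity
    rw [lt_sqrt (by positivity)]
    linear_combination hgap
  rw [hx]
  exact div_pos (by linarith) (by positivity)

theorem lt_of_quadratic (hc : 0 < c) (hd : 0 < d) (he : 0 < e) (hx : 0 < x)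
    (hquad : (c + 2 * d + e) * x ^ 2 + 2 * (d * (c + d)) * x = d * (c + d) * e) : x < e := by
  by_contra! hex
  have hb : 0 < d * (c + d) := by positivity
  nlinarith [mul_le_mul hex hex he.le hx.le]

theorem mul_sub_eq_of_quadratic
    (hquad : (c + 2 * d + e) * x ^ 2 + 2 * (d * (c + d)) * x = d * (c + d) * e) :
    (c * (2 * d + e) + 2 * (d * (d + e) + ((c + 2 * d + e) * x + d * (c + d)))) * (e - x)
      = e * ((c + 2 * (d + x)) * (c + d + e) - c * (c + (d + x))) := by
  linear_combination -2 * hquad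

theorem ratio_mul_ratio_of_quadratic (hc : 0 < c) (hd : 0 < d) (he : 0 < e) (hx : 0 < x)
    (hxe : x < e)
    (hquad : (c + 2 * d + e) * x ^ 2 + 2 * (d * (c + d)) * x = d * (c + d) * e) :
    (c * (2 * d + e) + 2 * (d * (d + e) + ((c + 2 * d + e) * x + d * (c + d)))) / (d * (c + d + e))
      * ((e - x) * (d + x) /
        ((c - perpFoot c (d + x)) * (e - x + (d + x) + (c - perpFoot c (d + x)))))
      * (c * d / (e * (c + d + e)))
      = ((c + 2 * (d + x)) / (c + d + e)) ^ 2 := by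
  have hw : 0 < c + 2 * (d + x) := by positivity
  have hex : 0 < e - x := by linarith
  have hR := mul_sub_eq_of_quadratic hquad
  rw [← eq_div_iff hex.ne'] at hR
  rw [hR, sub_perpFoot hw.ne']
  field_simp
  ring

theorem horoDiam_mul_horoDiam (hc : 0 < c) (hd : 0 < d) (he : 0 < e) (hx : 0 < x) (hxe : x < e)
    (hquad : (c + 2 * d + e) * x ^ 2 + 2 * (d * (c + d)) * x = d * (c + d) * e) :
    1 / 2 * √((c * (2 * d + e) + 2 * (d * (d + e) + ((c + 2 * d + e) * x + d * (c + d)))) /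
        (d * (c + d + e))) * horoDiam (e - x) (d + x) (c - perpFoot c (d + x)) * horoDiam c d e
        * (c + (d + e))
      = (d + x) * (c + (d + x)) * (d + e) := by
  have hw : 0 < c + 2 * (d + x) := by positivity
  have hex : 0 < e - x := by linarith
  have hcy : 0 < c - perpFoot c (d + x) := sub_perpFoot_pos hc (by positivity)
  have hsqrt := congrArg Real.sqrt (ratio_mul_ratio_of_quadratic hc hd he hx hxe hquad)
  rw [sqrt_sq (by positivity), sqrt_mul' _ (by positivity), sqrt_mul' _ (by positivity),
    eq_div_iff (by positivity)] at hsqrt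
  have hA := sub_perpFoot_add hw.ne'
  rw [eq_div_iff hw.ne'] at hA
  unfold horoDiam
  linear_combination (1 / 2 * (d + e) * (c - perpFoot c (d + x) + (d + x))) * hsqrt
    + (1 / 2 * (d + e)) * hA

theorem log_half_sqrt_eq (hc : 0 < c) (hd : 0 < d) (he : 0 < e) (hx : 0 < x) (hxe : x < e)
    (hquad : (c + 2 * d + e) * x ^ 2 + 2 * (d * (c + d)) * x = d * (c + d) * e) :
    log (1 / 2 * √((c * (2 * d + e) + 2 * (d * (d + e) + ((c + 2 * d + e) * x + d * (c + d)))) /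
        (d * (c + d + e))))
      = log (d + x) + log (c + (d + x)) + log (d + e) - log (c + (d + e))
        - log (horoDiam (e - x) (d + x) (c - perpFoot c (d + x))) - log (horoDiam c d e) := by
  have hcy : 0 < c - perpFoot c (d + x) := sub_perpFoot_pos hc (by positivity)
  have hR : 0 < 1 / 2 * √((c * (2 * d + e) +
      2 * (d * (d + e) + ((c + 2 * d + e) * x + d * (c + d)))) / (d * (c + d + e))) := by
    positivity
  have h2 := horoDiam_pos (v := d + x) (sub_pos.2 hxe) (by positivity) hcy
  have h3 := horoDiam_pos hc hd he
  have h := congrArg log (horoDiam_mul_horoDiam hc hd he hx hxe hquad)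
  rw [log_mul (by positivity) (by positivity), log_mul (by positivity) h3.ne',
    log_mul hR.ne' h2.ne', log_mul (x := (d + x) * (c + (d + x))) (by positivity) (by positivity),
    log_mul (x := d + x) (by positivity) (by positivity)] at h
  linarith

end root

/-- **The renormalized length combination for `ΔE_W(AB:DE)` (Appendix A).**
Let `L_C, L_D, L_E > 0`, and let `x`, `y`, `p` be as in the Appendix A computation.
Then the renormalized length combination `⌢gh + ⌢ah - ⌢af` equals
`log((1/2)·√((L_C(2L_D+L_E) + 2(L_D(L_D+L_E) +
√(L_D(L_C+L_D)(L_D+L_E)(L_C+L_D+L_E))))/(L_D(L_C+L_D+L_E))))`. -/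
theorem deltaEW_formula (LC LD LE : ℝ) (hC : 0 < LC) (hD : 0 < LD) (hE : 0 < LE) :
    let x := (-(LD * (LC + LD)) +
        Real.sqrt (LD * (LC + LD) * (LD + LE) * (LC + LD + LE))) / (LC + 2 * LD + LE)
    let y := LC * (LC + LD + x) / (LC + 2 * LD + 2 * x)
    let p := LC * (LC + LD + LE) / (LC + 2 * LD + 2 * LE)
    2 * Real.log (LC + LD + x - y) - Real.log (horoDiam y (LC - y) (LD + x)) -
        Real.log (horoDiam (LE - x) (LD + x) (LC - y)) +
        2 * Real.log (LD + LE) - Real.log (horoDiam LC LD LE) -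
        2 * Real.log (LC + LD + LE - p) + Real.log (horoDiam p (LC - p) (LD + LE)) =
      Real.log ((1 / 2) *
        Real.sqrt ((LC * (2 * LD + LE) + 2 * (LD * (LD + LE) +
            Real.sqrt (LD * (LC + LD) * (LD + LE) * (LC + LD + LE)))) /
          (LD * (LC + LD + LE)))) := by
  intro x y p
  have hquad := root_quadratic hC hD hE (x := x) rfl
  have hx : 0 < x := root_pos hC hD hE rfl
  have hxE : x < LE := lt_of_quadratic hC hD hE hx hquad
  have hy : y = perpFoot LC (LD + x) := by simp only [y, perpFoot]; ring
  have hp : p = perpFoot LC (LD + LE) := by simp only [p, perpFoot]; ring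
  rw [sqrt_discr_eq_root (by positivity) (x := x) rfl, log_half_sqrt_eq hC hD hE hx hxE hquad,
    show LC + LD + x - y = LC - y + (LD + x) by ring,
    show LC + LD + LE - p = LC - p + (LD + LE) by ring, hy, hp,
    log_horoDiam_perpFoot hC (by positivity), log_horoDiam_perpFoot hC (by positivity)]
  ring
end
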